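/- (The bracket on 1-forms extends the Poisson bracket of local functionals.) Let f, g ∈ 𝒜 and set α_i := δf/δu^i = Σ_t (−1)^t ∂_x^t(∂f/∂u^i_{(t)}) and β_j := δg/δu^j = Σ_t (−1)^t ∂_x^t(∂g/∂u^j_{(t)}). Then for every i, {α,β}_i = δh/δu^i in 𝒜, where h := Σ_{k,l} (δf/δu^k) η^{kl} ∂_x(δg/δu^l) is the density of the Poisson bracket { ∫f dx, ∫g dx } of the local functionals; that is, {δF, δG} = δ{F, G} for exact 1-forms. -/

import Mathlib

open Finset

/-- An abstract model of the ring `𝒜` of differential polynomials in the formal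
variables `u^i_{(s)}` (`i = 1,…,n`, `s ≥ 0`, `u^i_{(0)} = u^i`): a commutative
`ℝ`-algebra `A` equipped with the variables `u (i,s)`, the partial derivatives
`pd (i,s) = ∂/∂u^i_{(s)}` (commuting `ℝ`-linear derivations with
`∂u^j_{(t)}/∂u^i_{(s)} = δ`), a finiteness witness `supp f` (each `f` depends on
finitely many of the variables), and the total `x`-derivative
`∂_x f = Σ_{i,s} u^i_{(s+1)} ∂f/∂u^i_{(s)}` (a finite sum on each `f`). -/
structure DiffPolyAlg (n : ℕ) (A : Type*) [CommRing A] [Algebra ℝ A] where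
  u : Fin n × ℕ → A
  pd : Fin n × ℕ → A → A
  pd_add : ∀ v f g, pd v (f + g) = pd v f + pd v g
  pd_smul : ∀ v (r : ℝ) f, pd v (r • f) = r • pd v f
  pd_mul : ∀ v f g, pd v (f * g) = pd v f * g + f * pd v g
  pd_u : ∀ v w, pd v (u w) = if v = w then 1 else 0
  pd_comm : ∀ v w f, pd v (pd w f) = pd w (pd v f)
  supp : A → Finset (Fin n × ℕ)
  pd_eq_zero : ∀ f v, v ∉ supp f → pd v f = 0
  Dx : A → A
  Dx_add : ∀ f g, Dx (f + g) = Dx f + Dx g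
  Dx_smul : ∀ (r : ℝ) f, Dx (r • f) = r • Dx f
  Dx_mul : ∀ f g, Dx (f * g) = Dx f * g + f * Dx g
  Dx_spec : ∀ f, ∀ S : Finset (Fin n × ℕ), supp f ⊆ S →
      Dx f = ∑ v ∈ S, u (v.1, v.2 + 1) * pd v f

namespace DiffPolyAlg

variable {n : ℕ} {A : Type*} [CommRing A] [Algebra ℝ A]

/-- The finite set of orders `s` such that `∂f/∂u^i_{(s)}` can be nonzero;
sums `Σ_s` below are taken over this set. -/
def sset (D : DiffPolyAlg n A) (f : A) (i : Fin n) : Finset ℕ :=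
  ((D.supp f).filter fun v => v.1 = i).image Prod.snd

/-- The components `{α,β}_i = Σ_{k,l,s} η^{kl} [ (∂_x^{s+1}β_l)(∂α_i/∂u^k_{(s)})
− (∂_x^{s+1}α_l)(∂β_i/∂u^k_{(s)}) ]` of the Poisson bracket of two reduced
1-forms in flat coordinates (the sum over the pairs `(k,s)` is restricted to the
finite set where the partial derivatives can be nonzero). -/
def pbracket (D : DiffPolyAlg n A) (η : Fin n → Fin n → ℝ)
    (α β : Fin n → A) : Fin n → A := fun i =>
  (∑ v ∈ D.supp (α i), ∑ l, η v.1 l • (D.Dx^[v.2 + 1] (β l) * D.pd v (α i)))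
    - ∑ v ∈ D.supp (β i), ∑ l, η v.1 l • (D.Dx^[v.2 + 1] (α l) * D.pd v (β i))

end DiffPolyAlg

namespace DiffPolyAlg

variable {n : ℕ} {A : Type*} [CommRing A] [Algebra ℝ A]

/-- The variational derivative `δf/δu^i = Σ_t (−1)^t ∂_x^t(∂f/∂u^i_{(t)})`
(the sum over `t` is restricted to the finite set where `∂f/∂u^i_{(t)}` can be
nonzero). -/
def varDer (D : DiffPolyAlg n A) (f : A) (i : Fin n) : A :=
  ∑ t ∈ insert 0 (D.sset f i), ((-1 : ℝ) ^ t) • D.Dx^[t] (D.pd (i, t) f)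

end DiffPolyAlg

/-!
Write `ℓ_G X = Σ_s (∂G/∂u^k_{(s)}) ∂_x^s X` for the Fréchet derivative of `G` and `ℓ*_G` for its
formal adjoint `X ↦ Σ_s (-∂_x)^s ((∂G/∂u^i_{(s)}) X)`. The commutation rule
`[∂/∂u^i_{(s)}, ∂_x] = ∂/∂u^i_{(s-1)}` gives `ℓ_{∂_x G} = ∂_x ∘ ℓ_G` and `ℓ*_{∂_x G} = -ℓ*_G ∘ ∂_x`.
Substituting `δf/δu^k = Σ_t (-∂_x)^t ∂f/∂u^k_{(t)}` into these shows that both `ℓ*_{δf/δu^k}` and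
`ℓ_{δf/δu^i}` equal `Σ_{s,t} (-∂_x)^s ∘ ∂²f/∂u^i_{(s)}∂u^k_{(t)} ∘ ∂_x^t` (Helmholtz). The
product rule for the Euler operator reads
`δ(P ∂_x Q) = ℓ*_P ∂_x Q + ℓ*_{∂_x Q} P = ℓ*_P ∂_x Q - ℓ*_Q ∂_x P`; for `P = δf/δu^k`,
`Q = δg/δu^l` Helmholtz turns the two terms into those of `{α,β}_i`, and the symmetry of `η`
matches their indices.
-/

namespace DiffPolyAlg

variable {n : ℕ} {A : Type*} [CommRing A] [Algebra ℝ A] (D : DiffPolyAlg n A)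

def pdL (v : Fin n × ℕ) : A →ₗ[ℝ] A where
  toFun := D.pd v
  map_add' := D.pd_add v
  map_smul' := D.pd_smul v

def DxL : A →ₗ[ℝ] A where
  toFun := D.Dx
  map_add' := D.Dx_add
  map_smul' := D.Dx_smul

lemma pd_zero (v : Fin n × ℕ) : D.pd v 0 = 0 := map_zero (D.pdL v)

lemma pd_sum {ι : Type*} (v : Fin n × ℕ) (s : Finset ι) (F : ι → A) :
    D.pd v (∑ x ∈ s, F x) = ∑ x ∈ s, D.pd v (F x) := map_sum (D.pdL v) F s

lemma Dx_sum {ι : Type*} (s : Finset ι) (F : ι → A) :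
    D.Dx (∑ x ∈ s, F x) = ∑ x ∈ s, D.Dx (F x) := map_sum D.DxL F s

lemma Dx_zero : D.Dx 0 = 0 := map_zero D.DxL

lemma Dx_iterate_eq (t : ℕ) : D.Dx^[t] = ⇑(D.DxL ^ t) := (Module.End.coe_pow D.DxL t).symm

lemma Dx_iterate_zero (t : ℕ) : D.Dx^[t] 0 = 0 := by
  rw [Dx_iterate_eq, map_zero]

lemma Dx_iterate_add (t : ℕ) (f g : A) : D.Dx^[t] (f + g) = D.Dx^[t] f + D.Dx^[t] g := by
  rw [Dx_iterate_eq, map_add]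

lemma Dx_iterate_sub (t : ℕ) (f g : A) : D.Dx^[t] (f - g) = D.Dx^[t] f - D.Dx^[t] g := by
  rw [Dx_iterate_eq, map_sub]

lemma Dx_iterate_smul (t : ℕ) (r : ℝ) (f : A) : D.Dx^[t] (r • f) = r • D.Dx^[t] f := by
  rw [Dx_iterate_eq, map_smul]

lemma Dx_iterate_sum {ι : Type*} (t : ℕ) (s : Finset ι) (F : ι → A) :
    D.Dx^[t] (∑ x ∈ s, F x) = ∑ x ∈ s, D.Dx^[t] (F x) := by
  rw [Dx_iterate_eq, map_sum]

lemma pd_Dx_eq_add_sum (v : Fin n × ℕ) (f : A) {S : Finset (Fin n × ℕ)}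
    (hf : D.supp f ⊆ S) (hvf : D.supp (D.pd v f) ⊆ S) :
    D.pd v (D.Dx f) = D.Dx (D.pd v f) + ∑ w ∈ S, D.pd v (D.u (w.1, w.2 + 1)) * D.pd w f := by
  rw [D.Dx_spec f S hf, D.Dx_spec _ S hvf, D.pd_sum, ← sum_add_distrib]
  refine sum_congr rfl fun w _ => ?_
  rw [D.pd_mul, D.pd_comm v w, add_comm]

lemma pd_zero_Dx (i : Fin n) (f : A) : D.pd (i, 0) (D.Dx f) = D.Dx (D.pd (i, 0) f) := by
  rw [D.pd_Dx_eq_add_sum _ f subset_union_left subset_union_right]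
  simp [D.pd_u]

lemma pd_succ_Dx (i : Fin n) (t : ℕ) (f : A) :
    D.pd (i, t + 1) (D.Dx f) = D.Dx (D.pd (i, t + 1) f) + D.pd (i, t) f := by
  rw [D.pd_Dx_eq_add_sum _ f ((subset_union_left).trans (subset_insert (i, t) _))
    ((subset_union_right).trans (subset_insert (i, t) _)), sum_eq_single_of_mem (i, t)
    (mem_insert_self _ _) fun w _ hw => ?_]
  · simp [D.pd_u]
  · obtain ⟨j, s⟩ := w
    simp only [D.pd_u, Prod.mk.injEq, add_left_inj]
    rw [if_neg fun h => hw (by rw [h.1, h.2]), zero_mul]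

def OrderLT (N : ℕ) (f : A) : Prop := ∀ (i : Fin n) (s : ℕ), N ≤ s → D.pd (i, s) f = 0

lemma exists_orderLT (f : A) : ∃ N, D.OrderLT N f :=
  ⟨(D.supp f).sup Prod.snd + 1, fun i s hs => D.pd_eq_zero f (i, s) fun hmem => by
    have := le_sup (f := Prod.snd) hmem
    simp only at this
    omega⟩

variable {D}

namespace OrderLT

variable {N M : ℕ} {f g : A}

lemma mono (hf : D.OrderLT N f) (hNM : N ≤ M) : D.OrderLT M f :=
  fun i s hs => hf i s (hNM.trans hs)

lemma smul (hf : D.OrderLT N f) (r : ℝ) : D.OrderLT N (r • f) :=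
  fun i s hs => by rw [D.pd_smul, hf i s hs, smul_zero]

lemma mul (hf : D.OrderLT N f) (hg : D.OrderLT N g) : D.OrderLT N (f * g) :=
  fun i s hs => by rw [D.pd_mul, hf i s hs, hg i s hs, zero_mul, mul_zero, add_zero]

lemma sum {ι : Type*} {s : Finset ι} {F : ι → A} (h : ∀ x ∈ s, D.OrderLT N (F x)) :
    D.OrderLT N (∑ x ∈ s, F x) :=
  fun i t ht => by rw [D.pd_sum]; exact sum_eq_zero fun x hx => h x hx i t ht

lemma pd (hf : D.OrderLT N f) (v : Fin n × ℕ) : D.OrderLT N (D.pd v f) :=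
  fun i s hs => by rw [D.pd_comm, hf i s hs, D.pd_zero]

lemma Dx (hf : D.OrderLT N f) : D.OrderLT (N + 1) (D.Dx f) := by
  rintro i (_ | s) hs
  · omega
  · rw [D.pd_succ_Dx, hf i (s + 1) (by omega), hf i s (by omega), add_zero]
    exact D.Dx_zero

lemma Dx_iterate (hf : D.OrderLT N f) (t : ℕ) : D.OrderLT (N + t) (D.Dx^[t] f) := by
  induction t with
  | zero => exact hf
  | succ t ih => rw [Function.iterate_succ_apply']; exact ih.Dx

end OrderLT

variable (D)

/- The Euler operator `δ/δu^i`, the Fréchet derivative `ℓ_G X` and its adjoint `ℓ*_G X`, as linear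
maps in `G`, with the sums over `s` truncated at `s < M`. -/
def euler (M : ℕ) (i : Fin n) : A →ₗ[ℝ] A where
  toFun F := ∑ t ∈ range M, ((-1 : ℝ) ^ t) • D.Dx^[t] (D.pd (i, t) F)
  map_add' F G := by simp only [D.pd_add, D.Dx_iterate_add, smul_add, sum_add_distrib]
  map_smul' r F := by
    simp only [D.pd_smul, D.Dx_iterate_smul, RingHom.id_apply, smul_sum]
    exact sum_congr rfl fun _ _ => smul_comm _ _ _

def frechet (M : ℕ) (k : Fin n) (X : A) : A →ₗ[ℝ] A where
  toFun G := ∑ s ∈ range M, D.pd (k, s) G * D.Dx^[s] X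
  map_add' F G := by simp only [D.pd_add, add_mul, sum_add_distrib]
  map_smul' r F := by simp only [D.pd_smul, smul_mul_assoc, smul_sum]; rfl

def frechetAdj (M : ℕ) (i : Fin n) (X : A) : A →ₗ[ℝ] A where
  toFun G := ∑ s ∈ range M, ((-1 : ℝ) ^ s) • D.Dx^[s] (D.pd (i, s) G * X)
  map_add' F G := by simp only [D.pd_add, add_mul, D.Dx_iterate_add, smul_add, sum_add_distrib]
  map_smul' r F := by
    simp only [D.pd_smul, smul_mul_assoc, D.Dx_iterate_smul, RingHom.id_apply, smul_sum]
    exact sum_congr rfl fun _ _ => smul_comm _ _ _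

lemma euler_apply (M : ℕ) (i : Fin n) (F : A) :
    D.euler M i F = ∑ t ∈ range M, ((-1 : ℝ) ^ t) • D.Dx^[t] (D.pd (i, t) F) := rfl

lemma frechet_apply (M : ℕ) (k : Fin n) (X G : A) :
    D.frechet M k X G = ∑ s ∈ range M, D.pd (k, s) G * D.Dx^[s] X := rfl

lemma frechetAdj_apply (M : ℕ) (i : Fin n) (X G : A) :
    D.frechetAdj M i X G =
      ∑ s ∈ range M, ((-1 : ℝ) ^ s) • D.Dx^[s] (D.pd (i, s) G * X) := rfl

variable {D} {N M : ℕ}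

lemma varDer_eq_euler {f : A} (hf : D.OrderLT N f) (i : Fin n) :
    D.varDer f i = D.euler N i f := by
  rw [varDer, euler_apply]
  refine sum_congr_of_eq_on_inter (fun t _ ht => ?_) (fun t _ ht => ?_) fun _ _ _ => rfl
  · rw [hf i t (by simpa using ht), D.Dx_iterate_zero, smul_zero]
  · have : (i, t) ∉ D.supp f := fun h =>
      ht (mem_insert_of_mem (mem_image.2 ⟨(i, t), mem_filter.2 ⟨h, rfl⟩, rfl⟩))
    rw [D.pd_eq_zero f _ this, D.Dx_iterate_zero, smul_zero]

lemma OrderLT.varDer {f : A} (hf : D.OrderLT N f) (i : Fin n) :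
    D.OrderLT (2 * N) (D.varDer f i) := by
  rw [varDer_eq_euler hf, euler_apply]
  exact OrderLT.sum fun t ht =>
    (((hf.pd _).Dx_iterate t).smul _).mono (by have := mem_range.1 ht; omega)

lemma frechet_Dx {G : A} (hG : D.OrderLT N G) (hNM : N < M) (k : Fin n) (X : A) :
    D.frechet M k X (D.Dx G) = D.Dx (D.frechet M k X G) := by
  obtain ⟨M, rfl⟩ : ∃ M', M = M' + 1 := ⟨M - 1, by omega⟩
  simp only [frechet_apply, D.Dx_sum, D.Dx_mul, sum_add_distrib]
  rw [sum_range_succ', sum_range_succ' (fun s => D.Dx (D.pd (k, s) G) * _),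
    sum_range_succ (fun s => D.pd (k, s) G * _), hG k M (by omega)]
  simp only [D.pd_succ_Dx, D.pd_zero_Dx, add_mul, sum_add_distrib,
    ← Function.iterate_succ_apply' D.Dx, zero_mul, add_zero]
  abel

lemma frechetAdj_Dx {G : A} (hG : D.OrderLT N G) (hNM : N < M) (i : Fin n) (X : A) :
    D.frechetAdj M i X (D.Dx G) = -D.frechetAdj M i (D.Dx X) G := by
  obtain ⟨M, rfl⟩ : ∃ M', M = M' + 1 := ⟨M - 1, by omega⟩
  -- the `T`-terms telescope, and the last one vanishes because `G` has order `< M`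
  set T : ℕ → A := fun s => ((-1 : ℝ) ^ s) • D.Dx^[s + 1] (D.pd (i, s) G * X) with hT
  have hTM : T M = 0 := by simp only [hT, hG i M (by omega), zero_mul, D.Dx_iterate_zero, smul_zero]
  have hDx_mul (p : A) : D.Dx p * X = D.Dx (p * X) - p * D.Dx X := by rw [D.Dx_mul]; ring
  have h0 : D.pd (i, 0) (D.Dx G) * X = T 0 - D.pd (i, 0) G * D.Dx X := by
    simp [hT, D.pd_zero_Dx, hDx_mul]
  have hsucc (s : ℕ) : ((-1 : ℝ) ^ (s + 1)) • D.Dx^[s + 1] (D.pd (i, s + 1) (D.Dx G) * X)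
      = T (s + 1) - T s - ((-1 : ℝ) ^ (s + 1)) • D.Dx^[s + 1] (D.pd (i, s + 1) G * D.Dx X) := by
    simp only [hT, D.pd_succ_Dx, add_mul, hDx_mul, D.Dx_iterate_add, D.Dx_iterate_sub,
      ← Function.iterate_succ_apply D.Dx, Nat.succ_eq_add_one, pow_succ, mul_neg_one, neg_smul,
      smul_add, smul_sub]
    abel
  rw [frechetAdj_apply, frechetAdj_apply, sum_range_succ', sum_range_succ' _ M]
  rw [sum_congr rfl fun s _ => hsucc s, sum_sub_distrib, sum_range_sub, hTM]
  simp only [pow_zero, one_smul, Function.iterate_zero_apply, h0]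
  abel

lemma frechet_Dx_iterate {G : A} (hG : D.OrderLT N G) {t : ℕ} (ht : N + t ≤ M) (k : Fin n)
    (X : A) : D.frechet M k X (D.Dx^[t] G) = D.Dx^[t] (D.frechet M k X G) := by
  induction t with
  | zero => rfl
  | succ t ih =>
    rw [Function.iterate_succ_apply', frechet_Dx (hG.Dx_iterate t) (by omega), ih (by omega),
      ← Function.iterate_succ_apply' D.Dx]

lemma frechetAdj_Dx_iterate {G : A} (hG : D.OrderLT N G) {t : ℕ} (ht : N + t ≤ M) (i : Fin n)
    (X : A) :
    D.frechetAdj M i X (D.Dx^[t] G) = ((-1 : ℝ) ^ t) • D.frechetAdj M i (D.Dx^[t] X) G := by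
  induction t generalizing X with
  | zero => simp
  | succ t ih =>
    rw [Function.iterate_succ_apply', frechetAdj_Dx (hG.Dx_iterate t) (by omega), ih (by omega),
      ← Function.iterate_succ_apply D.Dx, pow_succ, mul_neg_one, neg_smul]

lemma frechet_of_le {G : A} (hG : D.OrderLT N G) (hNM : N ≤ M) (k : Fin n) (X : A) :
    D.frechet M k X G = D.frechet N k X G :=
  (sum_subset (range_subset_range.2 hNM) fun s _ hs => by
    rw [hG k s (by simpa using hs), zero_mul]).symm

lemma frechetAdj_of_le {G : A} (hG : D.OrderLT N G) (hNM : N ≤ M) (i : Fin n) (X : A) :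
    D.frechetAdj M i X G = D.frechetAdj N i X G :=
  (sum_subset (range_subset_range.2 hNM) fun s _ hs => by
    rw [hG i s (by simpa using hs), zero_mul, D.Dx_iterate_zero, smul_zero]).symm

lemma frechetAdj_varDer {f : A} (hf : D.OrderLT N f) (hM : 2 * N ≤ M) (i k : Fin n) (X : A) :
    D.frechetAdj M i X (D.varDer f k) = D.frechet M k X (D.varDer f i) := by
  rw [varDer_eq_euler hf, varDer_eq_euler hf, euler_apply, euler_apply, map_sum, map_sum]
  calc ∑ t ∈ range N, D.frechetAdj M i X (((-1 : ℝ) ^ t) • D.Dx^[t] (D.pd (k, t) f))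
      = ∑ t ∈ range N, ∑ s ∈ range N,
          ((-1 : ℝ) ^ s) • D.Dx^[s] (D.pd (i, s) (D.pd (k, t) f) * D.Dx^[t] X) := by
        refine sum_congr rfl fun t ht => ?_
        replace ht := mem_range.1 ht
        rw [map_smul, frechetAdj_Dx_iterate (hf.pd _) (by omega), smul_smul,
          ← mul_pow, neg_one_mul, neg_neg, one_pow, one_smul,
          frechetAdj_of_le (hf.pd _) (by omega), frechetAdj_apply]
    _ = ∑ s ∈ range N, ∑ t ∈ range N,
          ((-1 : ℝ) ^ s) • D.Dx^[s] (D.pd (i, s) (D.pd (k, t) f) * D.Dx^[t] X) := sum_comm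
    _ = ∑ s ∈ range N, D.frechet M k X (((-1 : ℝ) ^ s) • D.Dx^[s] (D.pd (i, s) f)) := by
        refine sum_congr rfl fun s hs => ?_
        replace hs := mem_range.1 hs
        rw [map_smul, frechet_Dx_iterate (hf.pd _) (by omega),
          frechet_of_le (hf.pd _) (by omega), frechet_apply, D.Dx_iterate_sum, smul_sum]
        simp only [D.pd_comm (i, s)]

lemma euler_mul (M : ℕ) (i : Fin n) (P R : A) :
    D.euler M i (P * R) = D.frechetAdj M i R P + D.frechetAdj M i P R := by
  rw [euler_apply, frechetAdj_apply, frechetAdj_apply, ← sum_add_distrib]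
  refine sum_congr rfl fun s _ => ?_
  rw [D.pd_mul, mul_comm P, D.Dx_iterate_add, smul_add]

lemma euler_mul_Dx {Q : A} (hQ : D.OrderLT N Q) (hNM : N < M) (i : Fin n) (P : A) :
    D.euler M i (P * D.Dx Q) = D.frechetAdj M i (D.Dx Q) P - D.frechetAdj M i (D.Dx P) Q := by
  rw [euler_mul, frechetAdj_Dx hQ hNM, sub_eq_add_neg]

lemma sum_supp_eq_sum_frechet (η : Fin n → Fin n → ℝ) {G : A} (hG : D.OrderLT M G)
    (Y : Fin n → A) :
    ∑ v ∈ D.supp G, ∑ l, η v.1 l • (D.Dx^[v.2 + 1] (Y l) * D.pd v G)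
      = ∑ k, ∑ l, η k l • D.frechet M k (D.Dx (Y l)) G := by
  rw [sum_congr_of_eq_on_inter (s₂ := univ ×ˢ range M) _ _ fun _ _ _ => rfl, sum_product]
  · refine sum_congr rfl fun k _ => ?_
    rw [sum_comm]
    refine sum_congr rfl fun l _ => ?_
    rw [frechet_apply, smul_sum]
    simp only [Function.iterate_succ_apply, mul_comm]
  · intro v _ hv
    rw [hG v.1 v.2 (by simpa using hv)]
    simp
  · intro v _ hv
    rw [D.pd_eq_zero G v hv]
    simp

end DiffPolyAlg

theorem bracket_of_exact_forms_general {n : ℕ} {A : Type*} [CommRing A]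
    [Algebra ℝ A] (D : DiffPolyAlg n A)
    (η : Fin n → Fin n → ℝ) (hη_symm : ∀ k l, η k l = η l k)
    (f g : A) :
    ∀ i : Fin n,
      D.pbracket η (D.varDer f) (D.varDer g) i =
        D.varDer (∑ k, ∑ l, η k l • (D.varDer f k * D.Dx (D.varDer g l))) i := by
  intro i
  obtain ⟨Nf, hf⟩ := D.exists_orderLT f
  obtain ⟨Ng, hg⟩ := D.exists_orderLT g
  replace hf := hf.mono (Nat.le_add_right Nf Ng)
  replace hg := hg.mono (Nat.le_add_left Ng Nf)
  set N := Nf + Ng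
  have hh : D.OrderLT (2 * N + 1) (∑ k, ∑ l, η k l • (D.varDer f k * D.Dx (D.varDer g l))) :=
    .sum fun k _ => .sum fun l _ => (((hf.varDer k).mono (by omega)).mul (hg.varDer l).Dx).smul _
  rw [DiffPolyAlg.pbracket, DiffPolyAlg.varDer_eq_euler hh,
    DiffPolyAlg.sum_supp_eq_sum_frechet η ((hf.varDer i).mono (M := 2 * N + 1) (by omega)),
    DiffPolyAlg.sum_supp_eq_sum_frechet η ((hg.varDer i).mono (M := 2 * N + 1) (by omega))]
  simp only [map_sum, map_smul, DiffPolyAlg.euler_mul_Dx (hg.varDer _) (Nat.lt_succ_self _),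
    DiffPolyAlg.frechetAdj_varDer hf (M := 2 * N + 1) (by omega),
    DiffPolyAlg.frechetAdj_varDer hg (M := 2 * N + 1) (by omega), smul_sub, sum_sub_distrib]
  congr 1
  rw [sum_comm]
  exact sum_congr rfl fun l _ => sum_congr rfl fun k _ => by rw [hη_symm]

/-- **the bracket on 1-forms extends the Poisson bracket of local
functionals.** Let `f, g ∈ 𝒜` and set `α_i := δf/δu^i`, `β_j := δg/δu^j`.
Then for every `i`, `{α,β}_i = δh/δu^i` in `𝒜`, where
`h := Σ_{k,l} (δf/δu^k) η^{kl} ∂_x(δg/δu^l)` is the density of the Poisson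
bracket `{∫f dx, ∫g dx}` of the local functionals; that is,
`{δF, δG} = δ{F, G}` for exact 1-forms. -/
theorem bracket_of_exact_forms {n : ℕ} (hn : 1 ≤ n) {A : Type*} [CommRing A]
    [Algebra ℝ A] (D : DiffPolyAlg n A)
    (η : Fin n → Fin n → ℝ) (hη_symm : ∀ k l, η k l = η l k)
    (η' : Fin n → Fin n → ℝ)
    (hη_nondeg : ∀ i j, ∑ k, η i k * η' k j = if i = j then (1 : ℝ) else 0)
    (f g : A) :
    ∀ i : Fin n,
      D.pbracket η (D.varDer f) (D.varDer g) i =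
        D.varDer (∑ k, ∑ l, η k l • (D.varDer f k * D.Dx (D.varDer g l))) i :=
  bracket_of_exact_forms_general D η hη_symm f g
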